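/- arXiv:2112.08136 — 2 statements merged into one kernel-verified Lean document; each statement's English description precedes it below -/
import Mathlib

section
/- Let Σ be a set of linear TGDs and D, D' databases, with C = adom(D) ∪ adom(D'). Then chase(D ∪ D', Σ) and chase(D,Σ) ∪ chase(D',Σ) are C-homomorphically equivalent: each is C-homomorphic to the other. -/
set_option maxHeartbeats 1000000

/-- Terms: constants, nulls, and Skolem nulls `sk i v ts` determined by a
rule index `i`, an existential variable `v`, and the frontier terms `ts`. -/
inductive NTerm : Type where
  | const : ℕ → NTerm
  | null : ℕ → NTerm
  | sk : ℕ → ℕ → List NTerm → NTerm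

/-- A fact: a relation symbol applied to a list of (ground) terms. -/
structure DFact : Type where
  rel : ℕ
  args : List NTerm

/-- A (query or rule) atom: `Sum.inl v` is a variable, `Sum.inr c` a constant. -/
structure Atom : Type where
  rel : ℕ
  args : List (ℕ ⊕ ℕ)

/-- Apply a substitution (assignment of terms to variables) to an atom. -/
def applyAtom (h : ℕ → NTerm) (a : Atom) : DFact :=
  ⟨a.rel, a.args.map fun t => match t with
    | Sum.inl v => h v
    | Sum.inr c => NTerm.const c⟩

def mapDFact (g : NTerm → NTerm) (f : DFact) : DFact :=
  ⟨f.rel, f.args.map g⟩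

/-- Active domain of an instance: all terms occurring in it. -/
def adom (I : Set DFact) : Set NTerm := { t | ∃ f ∈ I, t ∈ f.args }

/-- A `C`-homomorphism from `I` to `J`: maps the facts of `I` into `J`
and fixes every constant in `C`. -/
def IsHom (C : Set ℕ) (g : NTerm → NTerm) (I J : Set DFact) : Prop :=
  (∀ f ∈ I, mapDFact g f ∈ J) ∧ ∀ c ∈ C, g (NTerm.const c) = NTerm.const c

/-- A Boolean conjunctive query: a finite conjunction of atoms,
all variables read existentially. -/
abbrev BCQ := List Atom

/-- `I ⊨ q`: some substitution maps the atoms of `q` into `I` (fixing constants). -/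
def satCQ (I : Set DFact) (q : BCQ) : Prop :=
  ∃ h : ℕ → NTerm, ∀ a ∈ q, applyAtom h a ∈ I

def cqConsts (q : BCQ) : Set ℕ := { c | ∃ a ∈ q, Sum.inr c ∈ a.args }

def cqVars (q : BCQ) : Set ℕ := { v | ∃ a ∈ q, Sum.inl v ∈ a.args }

/-- A database: a finite instance containing no nulls. -/
def IsDatabase (D : Set DFact) : Prop :=
  D.Finite ∧ ∀ f ∈ D, ∀ t ∈ f.args, ∃ c, t = NTerm.const c

def constsOf (I : Set DFact) : Set ℕ := { c | NTerm.const c ∈ adom I }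

/-- A TGD `∀x∀y (body → ∃z head)`; existential variables are the head
variables not occurring in the body. -/
structure TGD : Type where
  body : List Atom
  head : List Atom

def atomVars (a : Atom) : List ℕ :=
  a.args.filterMap fun t => match t with
    | Sum.inl v => some v
    | Sum.inr _ => none

def TGD.bodyVars (σ : TGD) : List ℕ :=
  σ.body.foldr (fun a r => atomVars a ++ r) []

def TGD.frontier (σ : TGD) : List ℕ :=
  ((σ.head.foldr (fun a r => atomVars a ++ r) []).filter (fun u => u ∈ σ.bodyVars))

/-- Extend `h` by sending each existential variable `v` of the `i`-th rule `σ`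
to the Skolem null determined by `(i, h(frontier σ), v)`. -/
def skolemSub (i : ℕ) (σ : TGD) (h : ℕ → NTerm) : ℕ → NTerm := fun v =>
  if v ∈ σ.bodyVars then h v
  else NTerm.sk i v (σ.frontier.map h)

/-- `I` is a model of the TGD `σ`. -/
def modelsTGD (I : Set DFact) (σ : TGD) : Prop :=
  ∀ h : ℕ → NTerm, (∀ a ∈ σ.body, applyAtom h a ∈ I) →
    ∃ h' : ℕ → NTerm, (∀ v ∈ σ.bodyVars, h' v = h v) ∧
      ∀ a ∈ σ.head, applyAtom h' a ∈ I

/-- `D ∪ Σ ⊨ q` for a Boolean CQ `q`. -/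
def entailsCQ (Sg : List TGD) (D : Set DFact) (q : BCQ) : Prop :=
  ∀ I : Set DFact, D ⊆ I → (∀ σ ∈ Sg, modelsTGD I σ) → satCQ I q

/-- One step of the oblivious Skolem chase. -/
def chaseStep (Sg : List TGD) (I : Set DFact) : Set DFact :=
  I ∪ { f | ∃ i σ, Sg[i]? = some σ ∧ ∃ h : ℕ → NTerm,
        (∀ a ∈ σ.body, applyAtom h a ∈ I) ∧
        ∃ a ∈ σ.head, f = applyAtom (skolemSub i σ h) a }

def chaseK (Sg : List TGD) (D : Set DFact) : ℕ → Set DFact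
  | 0 => D
  | k + 1 => chaseStep Sg (chaseK Sg D k)

def chase (Sg : List TGD) (D : Set DFact) : Set DFact := ⋃ k, chaseK Sg D k


lemma chaseStep_mono (Sg : List TGD) {I J : Set DFact} (h : I ⊆ J) :
    chaseStep Sg I ⊆ chaseStep Sg J := by
  intro f hf
  rcases hf with hf | ⟨i, σ, hσ, g, hb, a, ha, rfl⟩
  · exact Or.inl (h hf)
  · exact Or.inr ⟨i, σ, hσ, g, fun b hb' => h (hb b hb'), a, ha, rfl⟩

lemma chaseK_mono (Sg : List TGD) {D E : Set DFact} (h : D ⊆ E) :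
    ∀ k, chaseK Sg D k ⊆ chaseK Sg E k
  | 0 => h
  | k + 1 => chaseStep_mono Sg (chaseK_mono Sg h k)

lemma chase_mono (Sg : List TGD) {D E : Set DFact} (h : D ⊆ E) :
    chase Sg D ⊆ chase Sg E := by
  intro f hf
  rcases Set.mem_iUnion.1 hf with ⟨k, hk⟩
  exact Set.mem_iUnion.2 ⟨k, chaseK_mono Sg h k hk⟩

lemma chaseK_split (Sg : List TGD) (hlin : ∀ σ ∈ Sg, σ.body.length = 1)
    (D D' : Set DFact) : ∀ k, chaseK Sg (D ∪ D') k ⊆ chaseK Sg D k ∪ chaseK Sg D' k := by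
  intro k
  induction k with
  | zero => exact fun f hf => hf
  | succ k ih =>
    intro f hf
    rcases hf with hf | ⟨i, σ, hσ, g, hb, a, ha, rfl⟩
    · rcases ih hf with h | h
      · exact Or.inl (Or.inl h)
      · exact Or.inr (Or.inl h)
    · have hσmem : σ ∈ Sg := by
        have := List.getElem?_eq_some_iff.1 hσ
        rcases this with ⟨hi, rfl⟩
        exact List.getElem_mem hi
      obtain ⟨b, hbody⟩ : ∃ b, σ.body = [b] :=
        List.length_eq_one_iff.1 (hlin σ hσmem)
      have hbmem : applyAtom g b ∈ chaseK Sg D k ∪ chaseK Sg D' k := by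
        apply ih
        exact hb b (by rw [hbody]; exact List.mem_singleton.2 rfl)
      have hall : ∀ J : Set DFact, applyAtom g b ∈ J → ∀ a' ∈ σ.body, applyAtom g a' ∈ J := by
        intro J hJ a' ha'
        rw [hbody] at ha'
        rcases List.mem_singleton.1 ha' with rfl
        exact hJ
      rcases hbmem with h | h
      · exact Or.inl (Or.inr ⟨i, σ, hσ, g, hall _ h, a, ha, rfl⟩)
      · exact Or.inr (Or.inr ⟨i, σ, hσ, g, hall _ h, a, ha, rfl⟩)

lemma chase_split (Sg : List TGD) (hlin : ∀ σ ∈ Sg, σ.body.length = 1)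
    (D D' : Set DFact) : chase Sg (D ∪ D') ⊆ chase Sg D ∪ chase Sg D' := by
  intro f hf
  rcases Set.mem_iUnion.1 hf with ⟨k, hk⟩
  rcases chaseK_split Sg hlin D D' k hk with h | h
  · exact Or.inl (Set.mem_iUnion.2 ⟨k, h⟩)
  · exact Or.inr (Set.mem_iUnion.2 ⟨k, h⟩)

lemma mapDFact_id (f : DFact) : mapDFact id f = f := by
  simp [mapDFact]

/-- for linear TGDs, `chase(D ∪ D', Σ)` and
`chase(D,Σ) ∪ chase(D',Σ)` are `C`-homomorphically equivalent, where
`C = adom(D) ∪ adom(D')`. -/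
theorem linear_chase_union_equiv (Sg : List TGD)
    (hlin : ∀ σ ∈ Sg, σ.body.length = 1) (D D' : Set DFact)
    (hD : IsDatabase D) (hD' : IsDatabase D') (C : Set ℕ)
    (hC : C = constsOf D ∪ constsOf D') :
    (∃ g, IsHom C g (chase Sg (D ∪ D')) (chase Sg D ∪ chase Sg D')) ∧
      (∃ g, IsHom C g (chase Sg D ∪ chase Sg D') (chase Sg (D ∪ D'))) := by
  constructor
  · refine ⟨id, ?_, fun c _ => rfl⟩
    intro f hf
    rw [mapDFact_id]
    exact chase_split Sg hlin D D' hf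
  · refine ⟨id, ?_, fun c _ => rfl⟩
    intro f hf
    rw [mapDFact_id]
    rcases hf with h | h
    · exact chase_mono Sg Set.subset_union_left h
    · exact chase_mono Sg Set.subset_union_right h
end

section
/- Data constructivity of linear TGDs: let Σ be a set of linear TGDs, D and D' databases, and let 𝒞 be the class of Boolean CQs p over a query schema with D ∪ D' ∪ Σ ⊨ p. If q ∈ 𝒞 is prime with respect to 𝒞, then D ∪ Σ ⊨ q or D' ∪ Σ ⊨ q. -/
set_option maxHeartbeats 1000000

def cqAtoms (q : BCQ) : Set Atom := { a | a ∈ q }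

/-- `q` is inseparable: it is not equivalent to the conjunction of two
nontrivial proper subqueries. -/
def CQInseparable (q : BCQ) : Prop :=
  ¬ ∃ q₁ q₂ : BCQ, q₁ ≠ [] ∧ q₂ ≠ [] ∧ cqAtoms q₁ ⊂ cqAtoms q ∧ cqAtoms q₂ ⊂ cqAtoms q ∧
      ∀ I : Set DFact, satCQ I q ↔ (satCQ I q₁ ∧ satCQ I q₂)

/-- Apply a partial variable-to-constant substitution to an atom. -/
def substVarAtom (s : ℕ → Option ℕ) (a : Atom) : Atom :=
  ⟨a.rel, a.args.map fun t => match t with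
    | Sum.inl v => (match s v with | some c => Sum.inr c | none => Sum.inl v)
    | t => t⟩

/-- `q` is most specific w.r.t. a class `𝒞` of BCQs. -/
def MostSpecific (𝒞 : Set BCQ) (q : BCQ) : Prop :=
  ∀ s : ℕ → Option ℕ, (∃ v ∈ cqVars q, (s v).isSome) → q.map (substVarAtom s) ∉ 𝒞

/-- `q` is prime w.r.t. `𝒞`: it belongs to `𝒞`, is inseparable and most specific. -/
def PrimeWrt (𝒞 : Set BCQ) (q : BCQ) : Prop :=
  q ∈ 𝒞 ∧ CQInseparable q ∧ MostSpecific 𝒞 q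

/-! The Skolem chase of `D ∪ D'` is universal, so a match `h` of `q` into it witnesses
`q ∈ 𝒞`. For linear TGDs every chase fact has a single ancestor in `D ∪ D'`, hence this chase
is the union of the chases of `D` and `D'`, and a fact of the chase of `D'` that is not in the
chase of `D` shares no null with it. Most specificity forces `h` to send every variable to a
null, so the atoms of `q` matched into the chase of `D` share no variable with the others;
inseparability then puts all atoms of `q` on one side. -/

def ConstantsOnly (D : Set DFact) : Prop :=
  ∀ f ∈ D, ∀ t ∈ f.args, ∃ c, t = NTerm.const c

theorem IsDatabase.constantsOnly {D : Set DFact} (hD : IsDatabase D) : ConstantsOnly D :=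
  hD.2

theorem ConstantsOnly.union {D D' : Set DFact} (hD : ConstantsOnly D) (hD' : ConstantsOnly D') :
    ConstantsOnly (D ∪ D') :=
  fun f hf => hf.elim (hD f) (hD' f)

instance : Nonempty NTerm := ⟨NTerm.const 0⟩

section Variables

variable {a : Atom} {σ : TGD} {v : ℕ}

theorem mem_atomVars : v ∈ atomVars a ↔ Sum.inl v ∈ a.args := by
  simp only [atomVars, List.mem_filterMap]
  constructor
  · rintro ⟨(w | c), hw, he⟩ <;> simp_all
  · exact fun hv => ⟨_, hv, rfl⟩

theorem mem_foldr_atomVars {l : List Atom} :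
    v ∈ l.foldr (fun a r => atomVars a ++ r) [] ↔ ∃ a ∈ l, Sum.inl v ∈ a.args := by
  induction l with
  | nil => simp
  | cons b l ih => simp [mem_atomVars]

theorem TGD.mem_bodyVars : v ∈ σ.bodyVars ↔ ∃ b ∈ σ.body, Sum.inl v ∈ b.args :=
  mem_foldr_atomVars

theorem TGD.mem_frontier_of_mem_head (ha : a ∈ σ.head) (hv : Sum.inl v ∈ a.args)
    (hvb : v ∈ σ.bodyVars) : v ∈ σ.frontier :=
  List.mem_filter.2 ⟨mem_foldr_atomVars.2 ⟨a, ha, hv⟩, decide_eq_true hvb⟩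

theorem TGD.mem_bodyVars_of_mem_frontier (hv : v ∈ σ.frontier) : v ∈ σ.bodyVars :=
  of_decide_eq_true (List.mem_filter.1 hv).2

theorem skolemSub_of_mem {i : ℕ} {h : ℕ → NTerm} (hv : v ∈ σ.bodyVars) :
    skolemSub i σ h v = h v :=
  if_pos hv

theorem skolemSub_of_not_mem {i : ℕ} {h : ℕ → NTerm} (hv : v ∉ σ.bodyVars) :
    skolemSub i σ h v = NTerm.sk i v (σ.frontier.map h) :=
  if_neg hv

end Variables

section Substitution

variable {a : Atom} {h h₁ h₂ : ℕ → NTerm}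

theorem applyAtom_congr (hh : ∀ v, Sum.inl v ∈ a.args → h₁ v = h₂ v) :
    applyAtom h₁ a = applyAtom h₂ a := by
  simp only [applyAtom, DFact.mk.injEq, true_and]
  refine List.map_congr_left fun t ht => ?_
  cases t with
  | inl v => exact hh v ht
  | inr c => rfl

theorem mapDFact_applyAtom {g : NTerm → NTerm} (hg : ∀ c, g (NTerm.const c) = NTerm.const c) :
    mapDFact g (applyAtom h a) = applyAtom (g ∘ h) a := by
  simp only [mapDFact, applyAtom, List.map_map, DFact.mk.injEq, true_and]
  refine List.map_congr_left fun t _ => ?_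
  cases t with
  | inl v => rfl
  | inr c => exact hg c

theorem mem_applyAtom_args {v : ℕ} (hv : Sum.inl v ∈ a.args) : h v ∈ (applyAtom h a).args :=
  List.mem_map.2 ⟨Sum.inl v, hv, rfl⟩

theorem exists_var_of_mem_applyAtom_args {t : NTerm} (ht : t ∈ (applyAtom h a).args)
    (htc : ∀ c, t ≠ NTerm.const c) : ∃ v, Sum.inl v ∈ a.args ∧ h v = t := by
  obtain ⟨(v | c), hx, rfl⟩ := List.mem_map.1 ht
  · exact ⟨v, hx, rfl⟩
  · exact absurd rfl (htc c)

theorem applyAtom_substVarAtom {s : ℕ → Option ℕ}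
    (hs : ∀ w c, s w = some c → h w = NTerm.const c) :
    applyAtom h (substVarAtom s a) = applyAtom h a := by
  simp only [applyAtom, substVarAtom, List.map_map, DFact.mk.injEq, true_and]
  refine List.map_congr_left fun t _ => ?_
  cases t with
  | inr c => rfl
  | inl w =>
    cases hsw : s w with
    | none => simp [hsw]
    | some c => simp [hsw, hs w c hsw]

theorem applyAtom_skolemSub_congr {i : ℕ} {σ : TGD} (ha : a ∈ σ.head)
    (hfr : σ.frontier.map h₁ = σ.frontier.map h₂) :
    applyAtom (skolemSub i σ h₁) a = applyAtom (skolemSub i σ h₂) a := by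
  refine applyAtom_congr fun v hv => ?_
  by_cases hvb : v ∈ σ.bodyVars
  · rw [skolemSub_of_mem hvb, skolemSub_of_mem hvb]
    exact List.map_inj_left.1 hfr v (σ.mem_frontier_of_mem_head ha hv hvb)
  · rw [skolemSub_of_not_mem hvb, skolemSub_of_not_mem hvb, hfr]

end Substitution

inductive Chase (Sg : List TGD) (D : Set DFact) : DFact → Prop where
  | base {f : DFact} : f ∈ D → Chase Sg D f
  | step {i : ℕ} {σ : TGD} {h : ℕ → NTerm} {a : Atom} : Sg[i]? = some σ →
      (∀ b ∈ σ.body, Chase Sg D (applyAtom h b)) → a ∈ σ.head →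
      Chase Sg D (applyAtom (skolemSub i σ h) a)

/-- Interprets the Skolem null `sk i u ts` in `K` as the value at `u` of a match of the head
of rule `i` whose frontier image is the interpretation of `ts`. The choice depends only on
`i` and that image, which makes the interpretation consistent across a whole head. -/
noncomputable def headWitness (Sg : List TGD) (K : Set DFact) (i : ℕ) (ts : List NTerm) :
    ℕ → NTerm :=
  Classical.epsilon fun h' => ∃ σ, Sg[i]? = some σ ∧ (∀ a ∈ σ.head, applyAtom h' a ∈ K) ∧
    σ.frontier.map h' = ts

theorem headWitness_spec {Sg : List TGD} {K : Set DFact} {i : ℕ} {ts : List NTerm}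
    (H : ∃ h', ∃ σ, Sg[i]? = some σ ∧ (∀ a ∈ σ.head, applyAtom h' a ∈ K) ∧
      σ.frontier.map h' = ts) :
    ∃ σ, Sg[i]? = some σ ∧ (∀ a ∈ σ.head, applyAtom (headWitness Sg K i ts) a ∈ K) ∧
      σ.frontier.map (headWitness Sg K i ts) = ts :=
  Classical.epsilon_spec H

noncomputable def chaseHom (Sg : List TGD) (K : Set DFact) : NTerm → NTerm
  | .const c => .const c
  | .null n => .null n
  | .sk i u ts => headWitness Sg K i (ts.map (chaseHom Sg K)) u

theorem modelsTGD_chase {Sg : List TGD} {D : Set DFact} {σ : TGD} (hσ : σ ∈ Sg) :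
    modelsTGD {f | Chase Sg D f} σ := by
  intro h hbody
  obtain ⟨i, hi⟩ := List.mem_iff_getElem?.1 hσ
  exact ⟨skolemSub i σ h, fun v hv => skolemSub_of_mem hv, fun a ha => Chase.step hi hbody ha⟩

namespace Chase

variable {Sg : List TGD} {D D' K : Set DFact} {f : DFact}

theorem step_of_linear (hlin : ∀ σ ∈ Sg, σ.body.length = 1) {i : ℕ} {σ : TGD}
    {h : ℕ → NTerm} {a b : Atom} (hi : Sg[i]? = some σ) (hb : b ∈ σ.body)
    (hfb : Chase Sg D (applyAtom h b)) (ha : a ∈ σ.head) :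
    Chase Sg D (applyAtom (skolemSub i σ h) a) := by
  obtain ⟨x, hx⟩ := List.length_eq_one_iff.1 (hlin σ (List.mem_of_getElem? hi))
  refine step hi (fun b' hb' => ?_) ha
  rw [hx, List.mem_singleton] at hb hb'
  rwa [hb', ← hb]

theorem chaseHom_mem (hD : ConstantsOnly D) (hDK : D ⊆ K)
    (hK : ∀ σ ∈ Sg, modelsTGD K σ) (hf : Chase Sg D f) :
    mapDFact (chaseHom Sg K) f ∈ K := by
  have hconst : ∀ c, chaseHom Sg K (NTerm.const c) = NTerm.const c := chaseHom.eq_1 Sg K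
  induction hf with
  | @base f hfD =>
    have hargs : f.args.map (chaseHom Sg K) = f.args.map id :=
      List.map_congr_left fun t ht => by
        obtain ⟨c, rfl⟩ := hD f hfD t ht
        exact hconst c
    have hfix : mapDFact (chaseHom Sg K) f = f := by simp [mapDFact, hargs]
    rw [hfix]
    exact hDK hfD
  | @step i σ h a hi _ ha ih =>
    have hbody : ∀ b ∈ σ.body, applyAtom (chaseHom Sg K ∘ h) b ∈ K := fun b hb =>
      mapDFact_applyAtom hconst (h := h) ▸ ih b hb
    obtain ⟨h', hagree, hhead⟩ := hK σ (List.mem_of_getElem? hi) _ hbody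
    have hfr' : σ.frontier.map h' = σ.frontier.map (chaseHom Sg K ∘ h) :=
      List.map_congr_left fun v hv => hagree v (σ.mem_bodyVars_of_mem_frontier hv)
    obtain ⟨σ', hi', hhead', hfr⟩ := headWitness_spec ⟨h', σ, hi, hhead, hfr'⟩
    cases hi.symm.trans hi'
    rw [mapDFact_applyAtom hconst]
    convert hhead' a ha using 1
    refine applyAtom_congr fun v hv => ?_
    by_cases hvb : v ∈ σ.bodyVars
    · rw [Function.comp_apply, skolemSub_of_mem hvb]
      exact (List.map_inj_left.1 hfr v (σ.mem_frontier_of_mem_head ha hv hvb)).symm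
    · rw [Function.comp_apply, skolemSub_of_not_mem hvb, chaseHom.eq_3, List.map_map]

theorem or_of_union (hlin : ∀ σ ∈ Sg, σ.body.length = 1) (hf : Chase Sg (D ∪ D') f) :
    Chase Sg D f ∨ Chase Sg D' f := by
  induction hf with
  | base hf => exact hf.imp base base
  | @step i σ h a hi _ ha ih =>
    obtain ⟨b, hb⟩ := List.length_pos_iff_exists_mem.1
      ((hlin σ (List.mem_of_getElem? hi)).symm ▸ Nat.one_pos)
    exact (ih b hb).imp (step_of_linear hlin hi hb · ha) (step_of_linear hlin hi hb · ha)

theorem exists_trigger_of_sk_mem_args (hD : ConstantsOnly D) (hf : Chase Sg D f) {i u : ℕ}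
    {ts : List NTerm} (hts : NTerm.sk i u ts ∈ f.args) :
    ∃ σ h, Sg[i]? = some σ ∧ (∀ b ∈ σ.body, Chase Sg D (applyAtom h b)) ∧
      σ.frontier.map h = ts := by
  induction hf with
  | @base f hfD =>
    obtain ⟨c, hc⟩ := hD f hfD _ hts
    cases hc
  | @step i' σ h a hi hbody _ ih =>
    obtain ⟨v, hva, hv⟩ := exists_var_of_mem_applyAtom_args hts fun c => by simp
    by_cases hvb : v ∈ σ.bodyVars
    · obtain ⟨b, hb, hvb'⟩ := σ.mem_bodyVars.1 hvb
      rw [skolemSub_of_mem hvb] at hv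
      exact ih b hb (hv ▸ mem_applyAtom_args hvb')
    · rw [skolemSub_of_not_mem hvb] at hv
      cases hv
      exact ⟨σ, h, hi, hbody, rfl⟩

/-- A null inherited from the parent comes from an ancestor outside the chase of `D` (the parent
is unique by linearity); a null created by the step would have been created in the chase of `D`
by the same trigger. -/
theorem not_mem_args_of_not_chase (hlin : ∀ σ ∈ Sg, σ.body.length = 1)
    (hD : ConstantsOnly D) (hD' : ConstantsOnly D') (hf : Chase Sg D' f)
    (hfD : ¬ Chase Sg D f) {t : NTerm} (ht : t ∈ f.args) (htc : ∀ c, t ≠ NTerm.const c)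
    {f' : DFact} (hf' : Chase Sg D f') : t ∉ f'.args := by
  induction hf generalizing t with
  | @base f hfD' =>
    obtain ⟨c, rfl⟩ := hD' f hfD' t ht
    exact absurd rfl (htc c)
  | @step i σ h a hi _ ha ih =>
    obtain ⟨v, hva, rfl⟩ := exists_var_of_mem_applyAtom_args ht htc
    by_cases hvb : v ∈ σ.bodyVars
    · obtain ⟨b, hb, hvb'⟩ := σ.mem_bodyVars.1 hvb
      rw [skolemSub_of_mem hvb] at htc ⊢
      exact ih b hb (fun hp => hfD (step_of_linear hlin hi hb hp ha)) (mem_applyAtom_args hvb') htc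
    · rw [skolemSub_of_not_mem hvb]
      intro htf'
      obtain ⟨σ', h', hi', hbody', hfr⟩ := hf'.exists_trigger_of_sk_mem_args hD htf'
      cases hi.symm.trans hi'
      exact hfD (applyAtom_skolemSub_congr ha hfr ▸ step hi hbody' ha)

end Chase

theorem entailsCQ_iff_satCQ_chase {Sg : List TGD} {D : Set DFact} {q : BCQ}
    (hD : ConstantsOnly D) : entailsCQ Sg D q ↔ satCQ {f | Chase Sg D f} q := by
  refine ⟨fun hq => hq _ (fun f => Chase.base) fun σ => modelsTGD_chase, ?_⟩
  rintro ⟨h, hh⟩ K hDK hK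
  refine ⟨chaseHom Sg K ∘ h, fun a ha => ?_⟩
  rw [← mapDFact_applyAtom (chaseHom.eq_1 Sg K)]
  exact (hh a ha).chaseHom_mem hD hDK hK

section Queries

variable {q : BCQ} {I : Set DFact}

theorem MostSpecific.ne_const {𝒞 : Set BCQ} (hms : MostSpecific 𝒞 q)
    (hI : ∀ p, satCQ I p → p ∈ 𝒞) {h : ℕ → NTerm} (hh : ∀ a ∈ q, applyAtom h a ∈ I) :
    ∀ v ∈ cqVars q, ∀ c, h v ≠ NTerm.const c := by
  intro v hv c hvc
  let s : ℕ → Option ℕ := fun w => match h w with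
    | .const c => some c
    | _ => none
  have hs : ∀ w c, s w = some c → h w = NTerm.const c := by
    intro w c hw
    simp only [s] at hw
    split at hw <;> simp_all
  refine hms s ⟨v, hv, by simp [s, hvc]⟩ (hI _ ⟨h, ?_⟩)
  simpa [applyAtom_substVarAtom hs] using hh

theorem cqAtoms_filter_ssubset {p : Atom → Bool} {a : Atom} (ha : a ∈ q) (hpa : p a = false) :
    cqAtoms (q.filter p) ⊂ cqAtoms q := by
  rw [Set.ssubset_def]
  refine ⟨fun x hx => (List.mem_filter.1 hx).1, fun hsub => ?_⟩
  have := (List.mem_filter.1 (hsub ha)).2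
  simp [hpa] at this

theorem satCQ_iff_satCQ_filter (p : Atom → Bool)
    (hvars : ∀ a ∈ q, ∀ b ∈ q, p a → ¬ p b → ∀ v, Sum.inl v ∈ a.args → Sum.inl v ∉ b.args) :
    satCQ I q ↔ satCQ I (q.filter p) ∧ satCQ I (q.filter (!p ·)) := by
  constructor
  · rintro ⟨h, hh⟩
    exact ⟨⟨h, fun a ha => hh a (List.mem_filter.1 ha).1⟩,
      ⟨h, fun a ha => hh a (List.mem_filter.1 ha).1⟩⟩
  rintro ⟨⟨h₁, hh₁⟩, ⟨h₂, hh₂⟩⟩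
  classical
  refine ⟨fun v => if v ∈ cqVars (q.filter p) then h₁ v else h₂ v, fun a ha => ?_⟩
  by_cases hpa : p a
  · have ha₁ : a ∈ q.filter p := List.mem_filter.2 ⟨ha, hpa⟩
    rw [applyAtom_congr fun v hv => if_pos ⟨a, ha₁, hv⟩]
    exact hh₁ a ha₁
  · have ha₂ : a ∈ q.filter (!p ·) := List.mem_filter.2 ⟨ha, by simpa using hpa⟩
    refine applyAtom_congr (h₂ := h₂) (fun v hv => if_neg ?_) ▸ hh₂ a ha₂
    rintro ⟨b, hb, hvb⟩
    obtain ⟨hbq, hpb⟩ := List.mem_filter.1 hb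
    exact hvars b hbq a ha hpb hpa v hvb hv

theorem CQInseparable.forall_or_forall (hq : CQInseparable q) (p : Atom → Prop)
    (hvars : ∀ a ∈ q, ∀ b ∈ q, p a → ¬ p b → ∀ v, Sum.inl v ∈ a.args → Sum.inl v ∉ b.args) :
    (∀ a ∈ q, p a) ∨ ∀ a ∈ q, ¬ p a := by
  classical
  by_contra! ⟨⟨b, hbq, hb⟩, ⟨a, haq, ha⟩⟩
  refine hq ⟨q.filter fun a => decide (p a), q.filter fun a => !decide (p a),
    List.ne_nil_of_mem (List.mem_filter.2 ⟨haq, by simpa using ha⟩),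
    List.ne_nil_of_mem (List.mem_filter.2 ⟨hbq, by simpa using hb⟩),
    cqAtoms_filter_ssubset hbq (by simpa using hb), cqAtoms_filter_ssubset haq (by simpa using ha),
    fun I => satCQ_iff_satCQ_filter _ fun a ha b hb hpa hpb => hvars a ha b hb (by simpa using hpa)
      (by simpa using hpb)⟩

end Queries

/-- data constructivity of linear TGDs: a BCQ prime w.r.t. the
class of BCQs entailed by `D ∪ D'` together with `Σ` is entailed by `D` with
`Σ` or by `D'` with `Σ`. -/
theorem linear_data_constructivity (Sg : List TGD)
    (hlin : ∀ σ ∈ Sg, σ.body.length = 1) (D D' : Set DFact)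
    (hD : IsDatabase D) (hD' : IsDatabase D') (q : BCQ)
    (hq : PrimeWrt { p : BCQ | entailsCQ Sg (D ∪ D') p } q) :
    entailsCQ Sg D q ∨ entailsCQ Sg D' q := by
  obtain ⟨hqC, hinsep, hms⟩ := hq
  have hchase : ∀ p, entailsCQ Sg (D ∪ D') p ↔ satCQ {f | Chase Sg (D ∪ D') f} p :=
    fun p => entailsCQ_iff_satCQ_chase (hD.constantsOnly.union hD'.constantsOnly)
  obtain ⟨h, hh⟩ := (hchase q).1 hqC
  have hnull := hms.ne_const (fun p => (hchase p).2) hh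
  have hsplit : ∀ a ∈ q, Chase Sg D (applyAtom h a) ∨ Chase Sg D' (applyAtom h a) :=
    fun a ha => (hh a ha).or_of_union hlin
  have hvars : ∀ a ∈ q, ∀ b ∈ q, Chase Sg D (applyAtom h a) → ¬ Chase Sg D (applyAtom h b) →
      ∀ v, Sum.inl v ∈ a.args → Sum.inl v ∉ b.args := fun a _ b hb hpa hpb v hva hvb =>
    ((hsplit b hb).resolve_left hpb).not_mem_args_of_not_chase hlin hD.constantsOnly
      hD'.constantsOnly hpb (mem_applyAtom_args hvb) (hnull v ⟨b, hb, hvb⟩) hpa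
      (mem_applyAtom_args hva)
  rcases hinsep.forall_or_forall _ hvars with hall | hnone
  · exact .inl ((entailsCQ_iff_satCQ_chase hD.constantsOnly).2 ⟨h, hall⟩)
  · exact .inr ((entailsCQ_iff_satCQ_chase hD'.constantsOnly).2
      ⟨h, fun a ha => (hsplit a ha).resolve_left (hnone a ha)⟩)
end
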